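/- arXiv:1610.03425 — 2 statements merged into one kernel-verified Lean document; each statement's English description precedes it below -/
import Mathlib

section
/- Let f satisfy Assumption A and ρ > 0. Let X ⊂ ℝ^d be a nonempty compact set, (S, Σ, P₀) a probability space, and ℓ : X × S → ℝ jointly measurable with x ↦ ℓ(x; s) continuous for every s ∈ S. Assume there is a measurable envelope Z̄ : S → ℝ₊ with |ℓ(x; s)| ≤ Z̄(s) for all x ∈ X and s ∈ S and E_{P₀}[Z̄^{1+ε}] < ∞ for some ε > 0. Let Z₁, Z₂, … be i.i.d. with law P₀ and assume the Glivenko–Cantelli property: sup_{x∈X} |(1/n)Σ_{i=1}^n ℓ(x; Z_i) − E_{P₀}[ℓ(x; Z)]| → 0 almost surely. Then sup_{x ∈ X} sup_{p ∈ Δ_{n,ρ}} | Σ_{i=1}^n p_i ℓ(x; Z_i) − E_{P₀}[ℓ(x; Z)] | → 0 almost surely as n → ∞. -/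
open MeasureTheory ProbabilityTheory Filter Set

noncomputable section

/-- Assumption A: `f : ℝ → ℝ ∪ {+∞}` is lower semicontinuous, convex, equal to `+∞` on
negative reals, three times continuously differentiable on a neighborhood of `1`, with
`f 1 = f' 1 = 0` and `f'' 1 = 2`. -/
structure IsDivergenceFn (f : ℝ → EReal) : Prop where
  lsc : LowerSemicontinuous f
  convex : ∀ x y a b : ℝ, 0 ≤ a → 0 ≤ b → a + b = 1 →
    f (a * x + b * y) ≤ (a : EReal) * f x + (b : EReal) * f y
  eq_top_of_neg : ∀ t : ℝ, t < 0 → f t = ⊤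
  smooth : ∃ g : ℝ → ℝ, ∃ ε : ℝ, 0 < ε ∧
    (∀ t ∈ Set.Ioo (1 - ε) (1 + ε), f t = (g t : EReal)) ∧
    ContDiffOn ℝ 3 g (Set.Ioo (1 - ε) (1 + ε)) ∧
    g 1 = 0 ∧ deriv g 1 = 0 ∧ deriv (deriv g) 1 = 2

/-- The empirical `f`-divergence ball `Δ_{n,ρ}`. -/
def simplexBall (f : ℝ → EReal) (n : ℕ) (ρ : ℝ) : Set (Fin n → ℝ) :=
  {p | (∀ i, 0 ≤ p i) ∧ ∑ i, p i = 1 ∧ ∑ i, f ((n : ℝ) * p i) ≤ (ρ : EReal)}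

/-- Sample mean `z̄ = (1/n) ∑ z_i`. -/
def sampleMean {n : ℕ} (z : Fin n → ℝ) : ℝ := (∑ i, z i) / n

/-- Sample variance `s_n(z)² = (1/n) ∑ (z_i − z̄)²`. -/
def sampleVar {n : ℕ} (z : Fin n → ℝ) : ℝ := (∑ i, (z i - sampleMean z) ^ 2) / n

/-- The Huber function `h_ε`. -/
def huber (ε t : ℝ) : ℝ := if |t| ≤ ε then t ^ 2 / 2 else ε * |t| - ε ^ 2 / 2

/-!
For `p` in the ball put `u i = n p i - 1`, so that `∑ p i z i` differs from the sample mean by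
`(1 / n) ∑ u i z i`. The divergence function grows quadratically near `1` and hence, by
convexity, at least linearly away from `1`: `f t ≥ huber δ (t - 1) / 4`, so the ball forces
`∑ huber δ (u i) ≤ 4 ρ`. Cauchy–Schwarz on the quadratic part of the Huber function and the
maximal envelope value on its linear part give `|∑ u i z i| ≤ C ‖w‖_r` with `w i = Z̄ (Z i)` and
`r = 1 + min ε 1 ≤ 2`. By the strong law of large numbers `‖w‖_r = O(n ^ (1 / r)) = o(n)`
almost surely, and the Glivenko–Cantelli hypothesis takes care of the sample mean.
-/

open Topology

lemma huber_nonneg {δ : ℝ} (hδ : 0 ≤ δ) (t : ℝ) : 0 ≤ huber δ t := by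
  unfold huber
  split_ifs with h
  · positivity
  · nlinarith [not_le.mp h]

lemma abs_le_two_div_mul_huber {δ t : ℝ} (hδ : 0 < δ) (ht : δ < |t|) :
    |t| ≤ 2 / δ * huber δ t := by
  rw [huber, if_neg ht.not_ge, div_mul_eq_mul_div, le_div_iff₀ hδ]
  nlinarith

lemma abs_sum_mul_le_of_sum_huber_le {ι : Type*} [Fintype ι] {δ K M : ℝ} (hδ : 0 < δ)
    {u z w : ι → ℝ} (hz : ∀ i, |z i| ≤ w i) (hM : 0 ≤ M) (hw : ∑ i, w i ^ 2 ≤ M ^ 2)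
    (hu : ∑ i, huber δ (u i) ≤ K) :
    |∑ i, u i * z i| ≤ (√(2 * K) + 2 * K / δ) * M := by
  classical
  have hw0 : ∀ i, 0 ≤ w i := fun i => (abs_nonneg _).trans (hz i)
  have hwM : ∀ i, w i ≤ M := fun i => by
    refine (pow_le_pow_iff_left₀ (hw0 i) hM two_ne_zero).mp (le_trans ?_ hw)
    exact Finset.single_le_sum (fun j _ => sq_nonneg (w j)) (Finset.mem_univ i)
  have hsub : ∀ s : Finset ι, ∑ i ∈ s, huber δ (u i) ≤ K := fun s =>
    (Finset.sum_le_sum_of_subset_of_nonneg (Finset.subset_univ s)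
      fun i _ _ => huber_nonneg hδ.le _).trans hu
  set small := Finset.univ.filter fun i => |u i| ≤ δ
  set large := Finset.univ.filter fun i => ¬ |u i| ≤ δ
  have hsmall : ∑ i ∈ small, |u i| * w i ≤ √(2 * K) * M := by
    refine (Real.sum_mul_le_sqrt_mul_sqrt _ _ _).trans (mul_le_mul ?_ ?_ (by positivity)
      (by positivity))
    · refine Real.sqrt_le_sqrt ?_
      have hsq : ∀ i ∈ small, |u i| ^ 2 = 2 * huber δ (u i) := fun i hi => by
        rw [huber, if_pos (Finset.mem_filter.mp hi).2, sq_abs]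
        ring
      rw [Finset.sum_congr rfl hsq, ← Finset.mul_sum]
      linarith [hsub small]
    · refine Real.sqrt_le_iff.mpr ⟨hM, le_trans ?_ hw⟩
      exact Finset.sum_le_sum_of_subset_of_nonneg (Finset.subset_univ _)
        fun i _ _ => sq_nonneg _
  have hlarge : ∑ i ∈ large, |u i| * w i ≤ 2 * K / δ * M := by
    calc ∑ i ∈ large, |u i| * w i ≤ ∑ i ∈ large, 2 / δ * huber δ (u i) * M :=
          Finset.sum_le_sum fun i hi => mul_le_mul
            (abs_le_two_div_mul_huber hδ (not_le.mp (Finset.mem_filter.mp hi).2)) (hwM i)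
            (hw0 i) (mul_nonneg (by positivity) (huber_nonneg hδ.le _))
      _ = 2 / δ * (∑ i ∈ large, huber δ (u i)) * M := by rw [Finset.mul_sum, Finset.sum_mul]
      _ ≤ 2 * K / δ * M := by
          rw [mul_div_right_comm]
          gcongr
          exact hsub large
  calc |∑ i, u i * z i| ≤ ∑ i, |u i| * w i := by
        refine (Finset.abs_sum_le_sum_abs _ _).trans (Finset.sum_le_sum fun i _ => ?_)
        rw [abs_mul]
        exact mul_le_mul_of_nonneg_left (hz i) (abs_nonneg _)
    _ = ∑ i ∈ small, |u i| * w i + ∑ i ∈ large, |u i| * w i :=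
        (Finset.sum_filter_add_sum_filter_not _ _ _).symm
    _ ≤ (√(2 * K) + 2 * K / δ) * M := by linarith

def ERealConvex (f : ℝ → EReal) : Prop :=
  ∀ x y a b : ℝ, 0 ≤ a → 0 ≤ b → a + b = 1 →
    f (a * x + b * y) ≤ (a : EReal) * f x + (b : EReal) * f y

lemma ERealConvex.convexOn {f : ℝ → EReal} (hf : ERealConvex f) {I : Set ℝ} (hI : Convex ℝ I)
    {g : ℝ → ℝ} (hfg : ∀ t ∈ I, f t = g t) : ConvexOn ℝ I g := by
  refine ⟨hI, fun x hx y hy a b ha hb hab => ?_⟩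
  have h := hf x y a b ha hb hab
  simp only [smul_eq_mul]
  have hmem : a * x + b * y ∈ I := by simpa only [smul_eq_mul] using hI hx hy ha hb hab
  rwa [hfg _ hmem, hfg x hx, hfg y hy, ← EReal.coe_mul, ← EReal.coe_mul,
    ← EReal.coe_add, EReal.coe_le_coe_iff] at h

/-- This is how convexity turns the quadratic growth of `f` near `1` into linear growth far
from `1`. -/
lemma ERealConvex.coe_le_of_le_lineMap {f : ℝ → EReal} (hf : ERealConvex f)
    {x y a c θ : ℝ} (hθ0 : 0 < θ) (hθ1 : θ ≤ 1) (hx : f x = a)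
    (hc : (c : EReal) ≤ f ((1 - θ) * x + θ * y)) :
    (((c - (1 - θ) * a) / θ : ℝ) : EReal) ≤ f y := by
  have h := hc.trans (hf x y (1 - θ) θ (by linarith) hθ0.le (by ring))
  rw [hx, ← EReal.coe_mul] at h
  induction hy : f y using EReal.rec with
  | bot =>
    rw [hy, EReal.coe_mul_bot_of_pos hθ0, EReal.add_bot] at h
    exact absurd (le_bot_iff.mp h) (EReal.coe_ne_bot _)
  | top => exact le_top
  | coe b =>
    rw [hy, ← EReal.coe_mul, ← EReal.coe_add, EReal.coe_le_coe_iff] at h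
    rw [EReal.coe_le_coe_iff, div_le_iff₀ hθ0]
    linarith

lemma ConvexOn.add_mul_sub_le_of_hasDerivAt {S : Set ℝ} {g : ℝ → ℝ} {x y g' : ℝ}
    (hg : ConvexOn ℝ S g) (hx : x ∈ S) (hy : y ∈ S) (hd : HasDerivAt g g' x) :
    g x + g' * (y - x) ≤ g y := by
  rcases lt_trichotomy x y with hxy | rfl | hxy
  · have h := hg.le_slope_of_hasDerivAt hx hy hxy hd
    rw [slope_def_field, le_div_iff₀ (sub_pos.2 hxy)] at h
    linarith
  · simp
  · have h := hg.slope_le_of_hasDerivAt hy hx hxy hd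
    rw [slope_def_field, div_le_iff₀ (sub_pos.2 hxy)] at h
    linarith

namespace IsDivergenceFn

variable {f : ℝ → EReal}

lemma apply_one (hf : IsDivergenceFn f) : f 1 = 0 := by
  obtain ⟨g, ε, hε, hfg, -, hg1, -⟩ := hf.smooth
  rw [hfg 1 ⟨by linarith, by linarith⟩, hg1, EReal.coe_zero]

lemma exists_sq_div_four_le (hf : IsDivergenceFn f) :
    ∃ η > 0, ∀ u, |u| ≤ η → ((u ^ 2 / 4 : ℝ) : EReal) ≤ f (1 + u) := by
  obtain ⟨g, ε, hε, hfg, hg, hg1, hg'1, hg''1⟩ := hf.smooth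
  set I := Ioo (1 - ε) (1 + ε)
  have h1I : (1 : ℝ) ∈ I := ⟨by linarith, by linarith⟩
  have hconv : ConvexOn ℝ I g := ERealConvex.convexOn hf.convex (convex_Ioo _ _) hfg
  have hderiv : ∀ x ∈ I, HasDerivAt g (deriv g x) x := fun x hx =>
    ((hg.contDiffAt (isOpen_Ioo.mem_nhds hx)).differentiableAt (by norm_num)).hasDerivAt
  have hg0 : ∀ x ∈ I, 0 ≤ g x := fun x hx => by
    simpa [hg1, hg'1] using hconv.add_mul_sub_le_of_hasDerivAt h1I hx (hderiv 1 h1I)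
  have hd2 : HasDerivAt (deriv g) 2 1 := by
    have hg' : ContDiffOn ℝ 2 (deriv g) I := hg.deriv_of_isOpen isOpen_Ioo (by norm_num)
    simpa [hg''1] using
      ((hg'.contDiffAt (isOpen_Ioo.mem_nhds h1I)).differentiableAt (by norm_num)).hasDerivAt
  obtain ⟨η, hη, hnear⟩ : ∃ η > 0, ∀ t ∈ Metric.closedBall 1 η,
      t ∈ I ∧ |deriv g t - 2 * (t - 1)| ≤ |t - 1| := by
    refine Metric.nhds_basis_closedBall.eventually_iff.mp
      ((isOpen_Ioo.eventually_mem h1I).and ?_)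
    filter_upwards [(hasDerivAt_iff_isLittleO.mp hd2).def one_pos] with t ht
    simpa [hg'1, Real.norm_eq_abs, mul_comm] using ht
  refine ⟨η, hη, fun u hu => ?_⟩
  have hball : ∀ v, |v| ≤ η → 1 + v ∈ Metric.closedBall 1 η := fun v hv => by
    simpa [Metric.mem_closedBall, Real.dist_eq] using hv
  obtain ⟨hmidI, hslope⟩ :=
    hnear _ (hball (u / 2) (by rw [abs_div, abs_two]; linarith [abs_nonneg u]))
  have hendI := (hnear _ (hball u hu)).1
  rw [add_sub_cancel_left] at hslope
  -- tangent at the midpoint: `g (1 + u) ≥ g (1 + u / 2) + g' (1 + u / 2) * (u / 2) ≥ (u / 2) ^ 2`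
  have hmid_slope : (u / 2) ^ 2 ≤ deriv g (1 + u / 2) * (u / 2) := by
    have h := neg_abs_le ((deriv g (1 + u / 2) - 2 * (u / 2)) * (u / 2))
    rw [abs_mul] at h
    nlinarith [mul_le_mul_of_nonneg_right hslope (abs_nonneg (u / 2)), sq_abs (u / 2)]
  have htan := hconv.add_mul_sub_le_of_hasDerivAt hmidI hendI (hderiv _ hmidI)
  rw [hfg _ hendI, EReal.coe_le_coe_iff]
  nlinarith [hg0 _ hmidI]

lemma exists_huber_le (hf : IsDivergenceFn f) :
    ∃ δ > 0, ∀ t, ((huber δ (t - 1) / 4 : ℝ) : EReal) ≤ f t := by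
  obtain ⟨η, hη, hsq⟩ := hf.exists_sq_div_four_le
  refine ⟨η, hη, fun t => ?_⟩
  by_cases ht : |t - 1| ≤ η
  · refine le_trans ?_ (by simpa using hsq (t - 1) ht)
    rw [huber, if_pos ht, EReal.coe_le_coe_iff]
    nlinarith [sq_nonneg (t - 1)]
  · push Not at ht
    have hu : 0 < |t - 1| := hη.trans ht
    set θ := η / |t - 1|
    have hθ0 : 0 < θ := div_pos hη hu
    have hθu : |θ * (t - 1)| = η := by
      rw [abs_mul, abs_of_pos hθ0, div_mul_cancel₀ _ hu.ne']
    have hmid : ((η ^ 2 / 4 : ℝ) : EReal) ≤ f ((1 - θ) * 1 + θ * t) := by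
      have h := hsq _ hθu.le
      rwa [← sq_abs, hθu, show 1 + θ * (t - 1) = (1 - θ) * 1 + θ * t by ring] at h
    have hchord := ERealConvex.coe_le_of_le_lineMap hf.convex hθ0
      ((div_le_one hu).mpr ht.le) (hf.apply_one.trans EReal.coe_zero.symm) hmid
    refine le_trans ?_ hchord
    rw [huber, if_neg ht.not_ge, EReal.coe_le_coe_iff, mul_zero, sub_zero,
      div_div_eq_mul_div, le_div_iff₀ hη]
    nlinarith

end IsDivergenceFn

@[norm_cast]
lemma EReal.coe_finset_sum {ι : Type*} (s : Finset ι) (c : ι → ℝ) :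
    ((∑ i ∈ s, c i : ℝ) : EReal) = ∑ i ∈ s, (c i : EReal) :=
  map_sum (⟨⟨(↑), EReal.coe_zero⟩, EReal.coe_add⟩ : ℝ →+ EReal) c s

lemma Real.rpow_le_one_add_rpow {x a b : ℝ} (hx : 0 ≤ x) (ha : 0 ≤ a) (hab : a ≤ b) :
    x ^ a ≤ 1 + x ^ b := by
  rcases le_or_gt x 1 with h | h
  · linarith [Real.rpow_le_one hx h ha, Real.rpow_nonneg hx b]
  · linarith [Real.rpow_le_rpow_of_exponent_le h.le hab]

lemma MeasureTheory.Integrable.rpow_of_le {S : Type*} [MeasurableSpace S] {P : Measure S}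
    [IsFiniteMeasure P] {g : S → ℝ} {a b : ℝ} (h : Integrable (fun s => g s ^ b) P)
    (hg : Measurable g) (hg0 : ∀ s, 0 ≤ g s) (ha : 0 ≤ a) (hab : a ≤ b) :
    Integrable (fun s => g s ^ a) P := by
  refine ((integrable_const 1).add h).mono' (hg.pow_const a).aestronglyMeasurable
    (ae_of_all _ fun s => ?_)
  rw [Real.norm_eq_abs, abs_of_nonneg (Real.rpow_nonneg (hg0 s) a)]
  exact Real.rpow_le_one_add_rpow (hg0 s) ha hab

lemma sum_sq_le_rpow_sum_rpow_sq {ι : Type*} (s : Finset ι) {w : ι → ℝ}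
    (hw : ∀ i ∈ s, 0 ≤ w i) {r : ℝ} (hr0 : 0 < r) (hr2 : r ≤ 2) :
    ∑ i ∈ s, w i ^ 2 ≤ ((∑ i ∈ s, w i ^ r) ^ r⁻¹) ^ 2 := by
  set A := ∑ i ∈ s, w i ^ r
  set M := A ^ r⁻¹
  have hA : 0 ≤ A := Finset.sum_nonneg fun i hi => Real.rpow_nonneg (hw i hi) r
  have hM : 0 ≤ M := Real.rpow_nonneg hA _
  have hsplit : ∀ x : ℝ, 0 ≤ x → x ^ 2 = x ^ r * x ^ (2 - r) := fun x hx => by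
    rw [← Real.rpow_add' hx (by norm_num), add_sub_cancel, ← Real.rpow_natCast]
    norm_num
  have hwM : ∀ i ∈ s, w i ≤ M := fun i hi => by
    rw [← Real.rpow_rpow_inv (hw i hi) hr0.ne']
    exact Real.rpow_le_rpow (Real.rpow_nonneg (hw i hi) r)
      (Finset.single_le_sum (fun j hj => Real.rpow_nonneg (hw j hj) r) hi) (by positivity)
  calc ∑ i ∈ s, w i ^ 2 ≤ ∑ i ∈ s, w i ^ r * M ^ (2 - r) :=
        Finset.sum_le_sum fun i hi => by
          rw [hsplit _ (hw i hi)]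
          gcongr
          exacts [Real.rpow_nonneg (hw i hi) r, hw i hi, hwM i hi]
    _ = M ^ r * M ^ (2 - r) := by rw [← Finset.sum_mul, Real.rpow_inv_rpow hA hr0.ne']
    _ = M ^ 2 := (hsplit M hM).symm

lemma tendsto_rpow_div_of_tendsto_div {A : ℕ → ℝ} {c q : ℝ} (hA : ∀ n, 0 ≤ A n) (hq0 : 0 ≤ q)
    (hq1 : q < 1) (h : Tendsto (fun n : ℕ => A n / n) atTop (𝓝 c)) :
    Tendsto (fun n : ℕ => A n ^ q / n) atTop (𝓝 0) := by
  have hpow : Tendsto (fun n : ℕ => (A n / n) ^ q) atTop (𝓝 (c ^ q)) :=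
    (Real.continuousAt_rpow_const _ q (Or.inr hq0)).tendsto.comp h
  have hgrowth : Tendsto (fun n : ℕ => (n : ℝ) ^ (1 - q)) atTop atTop :=
    (tendsto_rpow_atTop (by linarith)).comp tendsto_natCast_atTop_atTop
  refine (hpow.div_atTop hgrowth).congr' ?_
  filter_upwards [eventually_gt_atTop 0] with n hn
  have hn' : (0 : ℝ) < n := Nat.cast_pos.mpr hn
  rw [Real.div_rpow (hA n) hn'.le, div_div, ← Real.rpow_add hn', add_sub_cancel,
    Real.rpow_one]

lemma ae_tendsto_rpow_sum_div {Ω S : Type*} [MeasurableSpace Ω] [MeasurableSpace S]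
    {μ : Measure Ω} {P : Measure S} {Z : ℕ → Ω → S} (hZ : ∀ i, Measurable (Z i))
    (hindep : iIndepFun Z μ) (hlaw : ∀ i, μ.map (Z i) = P) {φ : S → ℝ} (hφ : Measurable φ)
    (hφ0 : ∀ s, 0 ≤ φ s) (hφi : Integrable φ P) {q : ℝ} (hq0 : 0 ≤ q) (hq1 : q < 1) :
    ∀ᵐ ω ∂μ, Tendsto (fun n : ℕ => (∑ i ∈ Finset.range n, φ (Z i ω)) ^ q / n) atTop (𝓝 0) := by
  have hident : ∀ i, IdentDistrib (fun ω => φ (Z i ω)) (fun ω => φ (Z 0 ω)) μ μ := fun i =>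
    (IdentDistrib.mk (hZ i).aemeasurable (hZ 0).aemeasurable (by rw [hlaw, hlaw])).comp hφ
  have hint : Integrable (fun ω => φ (Z 0 ω)) μ :=
    (integrable_map_measure hφ.aestronglyMeasurable (hZ 0).aemeasurable).mp (hlaw 0 ▸ hφi)
  filter_upwards [strong_law_ae_real _ hint
    (fun i j hij => (hindep.indepFun hij).comp hφ hφ) hident] with ω hω
  exact tendsto_rpow_div_of_tendsto_div (fun n => Finset.sum_nonneg fun i _ => hφ0 _) hq0 hq1 hω

section Deviation

variable {f : ℝ → EReal} {δ ρ : ℝ}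

lemma abs_sum_mul_sub_le (hδ : 0 < δ) (hhub : ∀ t, ((huber δ (t - 1) / 4 : ℝ) : EReal) ≤ f t)
    {n : ℕ} (hn : 0 < n) {p : Fin n → ℝ} (hp : p ∈ simplexBall f n ρ) {z w : Fin n → ℝ}
    (hz : ∀ i, |z i| ≤ w i) {M : ℝ} (hM : 0 ≤ M) (hw : ∑ i, w i ^ 2 ≤ M ^ 2) (c : ℝ) :
    |∑ i, p i * z i - c| ≤ |(∑ i, z i) / n - c| + (√(8 * ρ) + 8 * ρ / δ) * (M / n) := by
  have hn' : (0 : ℝ) < n := Nat.cast_pos.mpr hn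
  have hu : ∑ i, huber δ (n * p i - 1) ≤ 4 * ρ := by
    have h := (Finset.sum_le_sum fun i _ => hhub (n * p i)).trans hp.2.2
    rw [← EReal.coe_finset_sum, EReal.coe_le_coe_iff, ← Finset.sum_div] at h
    linarith
  have hreweight : ∑ i, p i * z i - c
      = (∑ i, (n * p i - 1) * z i) / n + ((∑ i, z i) / n - c) := by
    simp only [sub_mul, one_mul, Finset.sum_sub_distrib, mul_assoc, ← Finset.mul_sum]
    field_simp
    ring
  have hcross := abs_sum_mul_le_of_sum_huber_le hδ hz hM hw hu
  rw [show 2 * (4 * ρ) = 8 * ρ by ring] at hcross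
  rw [hreweight]
  refine (abs_add_le _ _).trans ?_
  rw [add_comm, abs_div, abs_of_pos hn', mul_div_assoc']
  gcongr

lemma sSup_abs_sum_mul_sub_integral_le {α S : Type*} [MeasurableSpace S] {P : Measure S}
    (hδ : 0 < δ) (hhub : ∀ t, ((huber δ (t - 1) / 4 : ℝ) : EReal) ≤ f t) (hρ : 0 ≤ ρ)
    {r : ℝ} (hr0 : 0 < r) (hr2 : r ≤ 2) {X : Set α} {ℓ : α → S → ℝ} {Zbar : S → ℝ}
    (hZbar0 : ∀ s, 0 ≤ Zbar s) (hZbar : Integrable Zbar P) (henv : ∀ x ∈ X, ∀ s, |ℓ x s| ≤ Zbar s)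
    (z : ℕ → S) {n : ℕ} (hn : 0 < n) :
    sSup {v : ℝ | ∃ x ∈ X, ∃ p ∈ simplexBall f n ρ,
        v = |(∑ i : Fin n, p i * ℓ x (z i.1)) - ∫ s, ℓ x s ∂P|}
      ≤ sSup ((fun x => |(∑ i ∈ Finset.range n, ℓ x (z i)) / n - ∫ s, ℓ x s ∂P|) '' X)
        + (√(8 * ρ) + 8 * ρ / δ) * ((∑ i ∈ Finset.range n, Zbar (z i) ^ r) ^ r⁻¹ / n) := by
  have hn' : (0 : ℝ) < n := Nat.cast_pos.mpr hn
  set M := (∑ i ∈ Finset.range n, Zbar (z i) ^ r) ^ r⁻¹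
  have hM : 0 ≤ M := Real.rpow_nonneg
    (Finset.sum_nonneg fun i _ => Real.rpow_nonneg (hZbar0 _) _) _
  have hw : ∑ i : Fin n, Zbar (z i) ^ 2 ≤ M ^ 2 := by
    rw [Fin.sum_univ_eq_sum_range (fun i => Zbar (z i) ^ 2)]
    exact sum_sq_le_rpow_sum_rpow_sq _ (fun i _ => hZbar0 _) hr0 hr2
  have hbdd : BddAbove
      ((fun x => |(∑ i ∈ Finset.range n, ℓ x (z i)) / n - ∫ s, ℓ x s ∂P|) '' X) := by
    refine ⟨(∑ i ∈ Finset.range n, Zbar (z i)) / n + ∫ s, Zbar s ∂P, ?_⟩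
    rintro _ ⟨x, hx, rfl⟩
    refine (abs_sub _ _).trans (add_le_add ?_ ?_)
    · rw [abs_div, abs_of_pos hn']
      gcongr
      exact (Finset.abs_sum_le_sum_abs _ _).trans (Finset.sum_le_sum fun i _ => henv x hx _)
    · exact norm_integral_le_of_norm_le hZbar
        (ae_of_all _ fun s => (Real.norm_eq_abs _).trans_le (henv x hx s))
  refine Real.sSup_le ?_ (add_nonneg
    (Real.sSup_nonneg (by rintro _ ⟨x, -, rfl⟩; exact abs_nonneg _))
    (mul_nonneg (by positivity) (div_nonneg hM hn'.le)))
  rintro _ ⟨x, hx, p, hp, rfl⟩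
  refine (abs_sum_mul_sub_le hδ hhub hn hp (fun i => henv x hx (z i)) hM hw _).trans ?_
  gcongr
  rw [Fin.sum_univ_eq_sum_range (fun i => ℓ x (z i))]
  exact le_csSup hbdd ⟨x, hx, rfl⟩

end Deviation

theorem stmt12_general {S : Type*} [MeasurableSpace S] (P₀ : Measure S) [IsProbabilityMeasure P₀]
    {Ω : Type*} [MeasurableSpace Ω] (μ : Measure Ω)
    (f : ℝ → EReal) (hf : IsDivergenceFn f) (ρ : ℝ) (hρ : 0 < ρ)
    (d : ℕ) (X : Set (Fin d → ℝ))
    (ℓ : (Fin d → ℝ) → S → ℝ)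
    (Zbar : S → ℝ) (hZbarMeas : Measurable Zbar) (hZbarNN : ∀ s, 0 ≤ Zbar s)
    (henv : ∀ x ∈ X, ∀ s : S, |ℓ x s| ≤ Zbar s)
    (ε : ℝ) (hε : 0 < ε) (hmom : Integrable (fun s => Zbar s ^ (1 + ε)) P₀)
    (Z : ℕ → Ω → S) (hZ : ∀ i, Measurable (Z i))
    (hindep : iIndepFun Z μ)
    (hlaw : ∀ i, Measure.map (Z i) μ = P₀)
    (hGC : ∀ᵐ ω ∂μ, Tendsto (fun n : ℕ =>
        sSup ((fun x : Fin d → ℝ =>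
          |(∑ i ∈ Finset.range n, ℓ x (Z i ω)) / n - ∫ s, ℓ x s ∂P₀|) '' X))
      atTop (nhds 0)) :
    ∀ᵐ ω ∂μ, Tendsto (fun n : ℕ =>
        sSup {r : ℝ | ∃ x ∈ X, ∃ p ∈ simplexBall f n ρ,
          r = |(∑ i : Fin n, p i * ℓ x (Z i.1 ω)) - ∫ s, ℓ x s ∂P₀|})
      atTop (nhds 0) := by
  obtain ⟨δ, hδ, hhub⟩ := hf.exists_huber_le
  -- `r ≤ 2` so that the `ℓ^r` norm of the envelope bounds its `ℓ²` norm
  set r := 1 + min ε 1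
  have hr1 : 1 < r := lt_add_of_pos_right 1 (lt_min hε one_pos)
  have hr2 : r ≤ 2 := by linarith [min_le_right ε 1]
  have hrε : r ≤ 1 + ε := by linarith [min_le_left ε 1]
  have hZbar : Integrable Zbar P₀ := by
    simpa using hmom.rpow_of_le hZbarMeas hZbarNN zero_le_one (by linarith)
  have hM := ae_tendsto_rpow_sum_div hZ hindep hlaw (hZbarMeas.pow_const r)
    (fun s => Real.rpow_nonneg (hZbarNN s) r)
    (hmom.rpow_of_le hZbarMeas hZbarNN (by linarith) hrε)
    (inv_nonneg.mpr (by linarith)) (inv_lt_one_of_one_lt₀ hr1)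
  filter_upwards [hGC, hM] with ω hGCω hMω
  refine squeeze_zero' (Eventually.of_forall fun n => Real.sSup_nonneg ?_)
    (eventually_atTop.mpr ⟨1, fun n hn => sSup_abs_sum_mul_sub_integral_le hδ hhub hρ.le
      (by linarith) hr2 hZbarNN hZbar henv (fun i => Z i ω) hn⟩)
    (by simpa using hGCω.add (hMω.const_mul (√(8 * ρ) + 8 * ρ / δ)))
  rintro _ ⟨x, -, p, -, rfl⟩
  exact abs_nonneg _

theorem stmt12 {S : Type*} [MeasurableSpace S] (P₀ : Measure S) [IsProbabilityMeasure P₀]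
    {Ω : Type*} [MeasurableSpace Ω] (μ : Measure Ω) [IsProbabilityMeasure μ]
    (f : ℝ → EReal) (hf : IsDivergenceFn f) (ρ : ℝ) (hρ : 0 < ρ)
    (d : ℕ) (X : Set (Fin d → ℝ)) (hXne : X.Nonempty) (hXc : IsCompact X)
    (ℓ : (Fin d → ℝ) → S → ℝ)
    (hmeas : Measurable fun q : (Fin d → ℝ) × S => ℓ q.1 q.2)
    (hcont : ∀ s : S, ContinuousOn (fun x => ℓ x s) X)
    (Zbar : S → ℝ) (hZbarMeas : Measurable Zbar) (hZbarNN : ∀ s, 0 ≤ Zbar s)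
    (henv : ∀ x ∈ X, ∀ s : S, |ℓ x s| ≤ Zbar s)
    (ε : ℝ) (hε : 0 < ε) (hmom : Integrable (fun s => Zbar s ^ (1 + ε)) P₀)
    (Z : ℕ → Ω → S) (hZ : ∀ i, Measurable (Z i))
    (hindep : iIndepFun Z μ)
    (hlaw : ∀ i, Measure.map (Z i) μ = P₀)
    (hGC : ∀ᵐ ω ∂μ, Tendsto (fun n : ℕ =>
        sSup ((fun x : Fin d → ℝ =>
          |(∑ i ∈ Finset.range n, ℓ x (Z i ω)) / n - ∫ s, ℓ x s ∂P₀|) '' X))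
      atTop (nhds 0)) :
    ∀ᵐ ω ∂μ, Tendsto (fun n : ℕ =>
        sSup {r : ℝ | ∃ x ∈ X, ∃ p ∈ simplexBall f n ρ,
          r = |(∑ i : Fin n, p i * ℓ x (Z i.1 ω)) - ∫ s, ℓ x s ∂P₀|})
      atTop (nhds 0) :=
  stmt12_general P₀ μ f hf ρ hρ d X ℓ Zbar hZbarMeas hZbarNN henv ε hε hmom Z hZ hindep hlaw hGC
end
end

section
/- Let n ∈ ℕ, ρ ≥ 0, and z ∈ ℝⁿ. Then sup { Σ_{i=1}^n p_i z_i : p ∈ ℝⁿ, p ≥ 0, Σ_i p_i = 1, Σ_{i=1}^n ½(n p_i − 1)² ≤ ρ } ≤ z̄ + √(2ρ s_n(z)² / n), where z̄ = (1/n)Σ z_i and s_n(z)² = (1/n)Σ (z_i − z̄)². -/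
open MeasureTheory ProbabilityTheory Filter Set

noncomputable section

/-!
Since `∑ pᵢ = 1`, the excess `∑ pᵢ zᵢ - z̄` equals `∑ (pᵢ - 1/n)(zᵢ - z̄)`. Cauchy–Schwarz bounds it
by `‖p - 1/n‖₂ · ‖z - z̄‖₂`, where the χ²-constraint gives `‖p - 1/n‖₂² ≤ 2ρ/n²` and
`‖z - z̄‖₂² = n s_n(z)²`.
-/

open Finset

section ChiSquareBall

variable {n : ℕ}

lemma sum_sq_sub_sampleMean (z : Fin n → ℝ) :
    ∑ i, (z i - sampleMean z) ^ 2 = n * sampleVar z := by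
  rcases eq_or_ne n 0 with rfl | hn
  · simp
  · rw [sampleVar, mul_div_cancel₀ _ (Nat.cast_ne_zero.mpr hn)]

lemma sampleVar_nonneg (z : Fin n → ℝ) : 0 ≤ sampleVar z := by
  unfold sampleVar
  positivity

lemma ne_zero_of_sum_eq_one {p : Fin n → ℝ} (hp : ∑ i, p i = 1) : n ≠ 0 := by
  rintro rfl
  simp at hp

lemma sum_mul_sub_sampleMean {p : Fin n → ℝ} (hp : ∑ i, p i = 1) (z : Fin n → ℝ) :
    ∑ i, p i * z i - sampleMean z = ∑ i, (p i - 1 / n) * (z i - sampleMean z) := by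
  have hn : (n : ℝ) ≠ 0 := Nat.cast_ne_zero.mpr (ne_zero_of_sum_eq_one hp)
  simp only [sub_mul, mul_sub, sum_sub_distrib, ← sum_mul, ← mul_sum, hp, sum_const, card_univ,
    Fintype.card_fin, nsmul_eq_mul, sampleMean]
  field_simp
  ring

lemma sum_sq_sub_inv_le {p : Fin n → ℝ} {ρ : ℝ} (h : ∑ i, ((n : ℝ) * p i - 1) ^ 2 / 2 ≤ ρ) :
    ∑ i, (p i - 1 / n) ^ 2 ≤ 2 * ρ / n ^ 2 := by
  rcases eq_or_ne n 0 with rfl | hn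
  · simp
  have hn' : (n : ℝ) ≠ 0 := Nat.cast_ne_zero.mpr hn
  have hterm (i : Fin n) : (p i - 1 / n) ^ 2 = ((n : ℝ) * p i - 1) ^ 2 / n ^ 2 := by
    field_simp
  rw [sum_congr rfl fun i _ => hterm i, ← sum_div]
  rw [← sum_div] at h
  gcongr
  linarith

lemma sum_mul_le_sampleMean_add_sqrt {p : Fin n → ℝ} {ρ : ℝ} (hp : ∑ i, p i = 1)
    (hpρ : ∑ i, ((n : ℝ) * p i - 1) ^ 2 / 2 ≤ ρ) (z : Fin n → ℝ) :
    ∑ i, p i * z i ≤ sampleMean z + Real.sqrt (2 * ρ * sampleVar z / n) := by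
  have hn : (n : ℝ) ≠ 0 := Nat.cast_ne_zero.mpr (ne_zero_of_sum_eq_one hp)
  calc ∑ i, p i * z i = sampleMean z + ∑ i, (p i - 1 / n) * (z i - sampleMean z) := by
        rw [← sum_mul_sub_sampleMean hp]; ring
    _ ≤ sampleMean z + Real.sqrt (∑ i, (p i - 1 / n) ^ 2) *
          Real.sqrt (∑ i, (z i - sampleMean z) ^ 2) := by
        gcongr; exact Real.sum_mul_le_sqrt_mul_sqrt _ _ _
    _ ≤ sampleMean z + Real.sqrt (2 * ρ / n ^ 2) * Real.sqrt (n * sampleVar z) := by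
        rw [sum_sq_sub_sampleMean]; gcongr; exact sum_sq_sub_inv_le hpρ
    _ = sampleMean z + Real.sqrt (2 * ρ * sampleVar z / n) := by
        rw [← Real.sqrt_mul' _ (by positivity [sampleVar_nonneg z])]
        congr 2
        field_simp

end ChiSquareBall

theorem stmt18 (n : ℕ) (ρ : ℝ) (hρ : 0 ≤ ρ) (z : Fin n → ℝ) :
    sSup ((fun p : Fin n → ℝ => ∑ i, p i * z i) ''
        {p | (∀ i, 0 ≤ p i) ∧ ∑ i, p i = 1 ∧ ∑ i, ((n : ℝ) * p i - 1) ^ 2 / 2 ≤ ρ}) ≤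
      sampleMean z + Real.sqrt (2 * ρ * sampleVar z / n) := by
  rcases eq_or_ne n 0 with rfl | hn
  · -- the ball is empty and `sSup ∅ = 0`
    simp [sampleMean]
  have hn' : (n : ℝ) ≠ 0 := Nat.cast_ne_zero.mpr hn
  refine csSup_le ⟨_, fun _ => 1 / n, ⟨fun _ => by positivity, ?_, ?_⟩, rfl⟩ ?_
  · simp [hn']
  · simpa [hn'] using hρ
  · rintro _ ⟨p, ⟨-, hp, hpρ⟩, rfl⟩
    exact sum_mul_le_sampleMean_add_sqrt hp hpρ z
end
end
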